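/- Let X be a finite set with a distinguished element x₀ and Y a finite set. Let W assign to each x ∈ X a pmf W(·|x) on Y with W(y|x₀) > 0 for all y, let P̃ᴬ be a pmf on X with P̃ᴬ(x₀) = 0, and let Pᴮ be a pmf on X. For (μ₁,μ₂) ∈ ℝ² define P^{μ₁,μ₂} : X × Y → ℝ by P^{μ₁,μ₂}(x,y) = ((1−μ₁)(1−μ₂)·1{x = x₀} + (1−μ₁)·μ₂·P̃ᴬ(x) + μ₁·Pᴮ(x))·W(y|x), and let I(μ₁,μ₂) denote the mutual information of P^{μ₁,μ₂}. Then the map μ₂ ↦ I(0, μ₂) has a derivative at μ₂ = 0, equal to ∑_{x∈X} P̃ᴬ(x)·D(W(·|x) ‖ W(·|x₀)). -/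

import Mathlib

open Real

/-- Kullback–Leibler divergence of finite-alphabet "distributions" `p`, `q`. -/
noncomputable def klDiv {Z : Type*} [Fintype Z] (p q : Z → ℝ) : ℝ :=
  ∑ z, p z * (Real.log (p z) - Real.log (q z))

/-- Mutual information of a joint function `P` on a product of finite alphabets. -/
noncomputable def mutualInfo {U Y : Type*} [Fintype U] [Fintype Y] (P : U → Y → ℝ) : ℝ :=
  ∑ u, ∑ y, P u y *
    (Real.log (P u y) - Real.log (∑ y', P u y') - Real.log (∑ u', P u' y))

/-!
The mutual information of the input `c` through the channel `W` is
`I(c) = ∑ₓ c(x) D(W(·|x) ‖ c W)`, where `c W` is the output law. Its derivative along the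
segment from `p` to `q` is `∑ₓ (q - p)(x) D(W(·|x) ‖ p W)` plus the term coming from the
variation of the output law, which is `-∑_y ((q - p) W)(y) = -(∑ q - ∑ p)` and vanishes.
Here `p` is the point mass at `x₀` and `q = P̃ᴬ`, so `p W = W(·|x₀)` and the `x₀`-term drops
out because `D(W(·|x₀) ‖ W(·|x₀)) = 0`.
-/

section Channel

variable {X Y : Type*} [Fintype X] [Fintype Y]

noncomputable def channelOutput (W : X → Y → ℝ) (c : X → ℝ) (y : Y) : ℝ :=
  ∑ x, c x * W x y

theorem hasDerivAt_lineMap (a b t : ℝ) :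
    HasDerivAt (fun μ : ℝ => (1 - μ) * a + μ * b) (b - a) t :=
  (((hasDerivAt_id t).const_sub 1).mul_const a).fun_add ((hasDerivAt_id t).mul_const b)
    |>.congr_deriv (by ring)

theorem klDiv_self (p : Y → ℝ) : klDiv p p = 0 := by
  simp [klDiv]

theorem sum_channelOutput {W : X → Y → ℝ} (hW1 : ∀ x, ∑ y, W x y = 1) (c : X → ℝ) :
    ∑ y, channelOutput W c y = ∑ x, c x := by
  simp only [channelOutput]
  rw [Finset.sum_comm]
  simp_rw [← Finset.mul_sum, hW1, mul_one]

omit [Fintype Y] in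
theorem channelOutput_lineMap (W : X → Y → ℝ) (p q : X → ℝ) (μ : ℝ) :
    channelOutput W (fun x => (1 - μ) * p x + μ * q x) =
      fun y => (1 - μ) * channelOutput W p y + μ * channelOutput W q y := by
  ext y
  simp only [channelOutput, add_mul, Finset.sum_add_distrib, mul_assoc, ← Finset.mul_sum]

theorem mutualInfo_channel {W : X → Y → ℝ} (hW1 : ∀ x, ∑ y, W x y = 1) (c : X → ℝ) :
    mutualInfo (fun x y => c x * W x y) = ∑ x, c x * klDiv (W x) (channelOutput W c) := by
  simp only [mutualInfo, klDiv, channelOutput, ← Finset.mul_sum, hW1, mul_one]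
  refine Finset.sum_congr rfl fun x _ => ?_
  rw [Finset.mul_sum]
  refine Finset.sum_congr rfl fun y _ => ?_
  rcases eq_or_ne (c x) 0 with hc | hc
  · simp [hc]
  rcases eq_or_ne (W x y) 0 with hW | hW
  · simp [hW]
  rw [Real.log_mul hc hW]
  ring

theorem hasDerivAt_klDiv_right (p : Y → ℝ) {r : ℝ → Y → ℝ} {r' : Y → ℝ} {t : ℝ}
    (hr : ∀ y, HasDerivAt (fun μ => r μ y) (r' y) t) (hr0 : ∀ y, r t y ≠ 0) :
    HasDerivAt (fun μ => klDiv p (r μ)) (-∑ y, p y * (r' y / r t y)) t := by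
  simp only [klDiv, ← Finset.sum_neg_distrib]
  refine HasDerivAt.fun_sum fun y _ => ?_
  exact (((hr y).log (hr0 y)).const_sub _).const_mul (p y) |>.congr_deriv (by ring)

theorem sum_mul_sum_div_channelOutput (W : X → Y → ℝ) (p : X → ℝ) (d : Y → ℝ)
    (hp : ∀ y, channelOutput W p y ≠ 0) :
    ∑ x, p x * ∑ y, W x y * (d y / channelOutput W p y) = ∑ y, d y := by
  simp_rw [Finset.mul_sum]
  rw [Finset.sum_comm]
  refine Finset.sum_congr rfl fun y _ => ?_
  simp_rw [← mul_assoc, ← Finset.sum_mul]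
  exact mul_div_cancel₀ _ (hp y)

theorem hasDerivAt_mutualInfo_lineMap {W : X → Y → ℝ} (hW1 : ∀ x, ∑ y, W x y = 1)
    {p q : X → ℝ} (hpq : ∑ x, q x = ∑ x, p x) (hp : ∀ y, channelOutput W p y ≠ 0) :
    HasDerivAt (fun μ => mutualInfo (fun x y => ((1 - μ) * p x + μ * q x) * W x y))
      (∑ x, (q x - p x) * klDiv (W x) (channelOutput W p)) 0 := by
  simp only [mutualInfo_channel hW1, channelOutput_lineMap]
  have hdrift : ∑ x, p x * ∑ y, W x y *
      ((channelOutput W q y - channelOutput W p y) / channelOutput W p y) = 0 := by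
    rw [sum_mul_sum_div_channelOutput W p _ hp, Finset.sum_sub_distrib,
      sum_channelOutput hW1, sum_channelOutput hW1, hpq, sub_self]
  refine (HasDerivAt.fun_sum fun x _ => (hasDerivAt_lineMap (p x) (q x) 0).fun_mul
    (hasDerivAt_klDiv_right (W x) (fun y => hasDerivAt_lineMap _ _ 0) (by simpa using hp)))
    |>.congr_deriv ?_
  simp only [sub_zero, one_mul, zero_mul, add_zero, mul_neg, Finset.sum_add_distrib,
    Finset.sum_neg_distrib, hdrift, neg_zero]

end Channel

theorem stmt_3_general {X Y : Type*} [Fintype X] [Fintype Y] [DecidableEq X]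
    (x₀ : X) (W : X → Y → ℝ)
    (hW1 : ∀ x, ∑ y, W x y = 1)
    (hWpos : ∀ y, 0 < W x₀ y)
    (PtA PB : X → ℝ)
    (hPtA1 : ∑ x, PtA x = 1)
    (I : ℝ → ℝ → ℝ)
    (hI : ∀ μ₁ μ₂, I μ₁ μ₂ = mutualInfo (fun (x : X) (y : Y) =>
      ((1 - μ₁) * (1 - μ₂) * (if x = x₀ then 1 else 0)
        + (1 - μ₁) * μ₂ * PtA x + μ₁ * PB x) * W x y)) :
    HasDerivAt (fun μ₂ => I 0 μ₂) (∑ x, PtA x * klDiv (W x) (W x₀)) 0 := by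
  set δ : X → ℝ := fun x => if x = x₀ then 1 else 0
  have hδW : channelOutput W δ = W x₀ := by ext y; simp [channelOutput, δ]
  have hI0 : (fun μ₂ => I 0 μ₂) =
      fun μ => mutualInfo (fun x y => ((1 - μ) * δ x + μ * PtA x) * W x y) := by
    ext μ; simp [hI, δ]
  have hderiv := hasDerivAt_mutualInfo_lineMap hW1 (p := δ) (q := PtA)
    (by simp [hPtA1, δ]) (by simpa [hδW] using fun y => (hWpos y).ne')
  rw [hI0]
  convert hderiv using 1
  simp [hδW, sub_mul, Finset.sum_sub_distrib, δ, klDiv_self]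

theorem stmt_3 {X Y : Type*} [Fintype X] [Fintype Y] [DecidableEq X]
    (x₀ : X) (W : X → Y → ℝ)
    (hW0 : ∀ x y, 0 ≤ W x y) (hW1 : ∀ x, ∑ y, W x y = 1)
    (hWpos : ∀ y, 0 < W x₀ y)
    (PtA PB : X → ℝ)
    (hPtA0 : ∀ x, 0 ≤ PtA x) (hPtA1 : ∑ x, PtA x = 1) (hPtAx0 : PtA x₀ = 0)
    (hPB0 : ∀ x, 0 ≤ PB x) (hPB1 : ∑ x, PB x = 1)
    (I : ℝ → ℝ → ℝ)
    (hI : ∀ μ₁ μ₂, I μ₁ μ₂ = mutualInfo (fun (x : X) (y : Y) =>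
      ((1 - μ₁) * (1 - μ₂) * (if x = x₀ then 1 else 0)
        + (1 - μ₁) * μ₂ * PtA x + μ₁ * PB x) * W x y)) :
    HasDerivAt (fun μ₂ => I 0 μ₂) (∑ x, PtA x * klDiv (W x) (W x₀)) 0 :=
  stmt_3_general x₀ W hW1 hWpos PtA PB hPtA1 I hI
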